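/- For integers k ≥ 1, Q ≥ 1, R ≥ 1, and any ε > 0, there is a constant C = C(k, ε) such that #{1 ≤ n ≤ R : d_Q(n) > D} ≤ C · D^{-k} · R · Q^{εk} for all real D > 0, where d_Q(n) is the number of divisors q of n with Q ≤ q < 2Q. -/

import Mathlib

/-!
By Chebyshev's inequality it suffices to bound the moment `∑_{n ≤ R} d_Q(n)^k` by `R Q^{εk}`.
Expanding the `k`-th power, the moment counts the pairs of a tuple `q ∈ [Q, 2Q)^k` and an
`n ≤ R` divisible by `ℓ = lcm q`, so it is at most `R ∑_q 1 / lcm q`. Grouping the tuples by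
`ℓ ≤ (2Q)^k`, each `ℓ` arises from at most `d(ℓ)^k` tuples, and the divisor bound
`d(ℓ)^k ≪ ℓ^{ε/2}` together with `∑_{ℓ ≤ N} 1/ℓ ≪ N^{ε/2}` finishes the proof.
-/

open Finset Real

theorem succ_le_mul_pow_of_one_lt {x : ℝ} (hx : 1 < x) (a : ℕ) :
    (a + 1 : ℝ) ≤ (1 + (log x)⁻¹) * x ^ a := by
  have hlog : 0 < log x := log_pos hx
  have hxa : 1 ≤ x ^ a := one_le_pow₀ hx.le
  have hexp : a * log x + 1 ≤ x ^ a := by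
    rw [← rpow_natCast, rpow_def_of_pos (by linarith), mul_comm]
    exact add_one_le_exp _
  have : (a : ℝ) ≤ (log x)⁻¹ * x ^ a := by
    rw [inv_mul_eq_div, le_div_iff₀ hlog]
    linarith
  linarith

theorem succ_le_pow_of_two_le {x : ℝ} (hx : 2 ≤ x) (a : ℕ) : (a + 1 : ℝ) ≤ x ^ a :=
  calc (a + 1 : ℝ) ≤ 2 ^ a := by exact_mod_cast Nat.lt_two_pow_self
    _ ≤ x ^ a := pow_le_pow_left₀ zero_le_two hx a

theorem prod_primeFactors_rpow_pow_factorization {n : ℕ} (hn : n ≠ 0) (δ : ℝ) :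
    ∏ p ∈ n.primeFactors, ((p : ℝ) ^ δ) ^ n.factorization p = (n : ℝ) ^ δ := by
  conv_rhs => rw [Nat.prod_primeFactors_pow_factorization hn]
  push_cast
  rw [← Real.finsetProd_rpow _ _ (fun p _ => by positivity)]
  exact prod_congr rfl fun p _ => rpow_pow_comm p.cast_nonneg δ _

theorem exists_card_divisors_le_mul_rpow {δ : ℝ} (hδ : 0 < δ) :
    ∃ C : ℝ, 0 < C ∧ ∀ n : ℕ, n ≠ 0 → (#n.divisors : ℝ) ≤ C * (n : ℝ) ^ δ := by
  set C₀ : ℝ := 1 + (log (2 ^ δ))⁻¹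
  have h2δ : 1 < (2 : ℝ) ^ δ := one_lt_rpow one_lt_two hδ
  have hC₀ : 1 ≤ C₀ := le_add_of_nonneg_right (inv_nonneg.2 (log_nonneg h2δ.le))
  set M : ℕ := ⌈(2 : ℝ) ^ δ⁻¹⌉₊
  refine ⟨C₀ ^ M, by positivity, fun n hn => ?_⟩
  -- The local factor `a + 1` of `d(n)` at `p^a` is at most `(p^δ)^a` unless `p^δ < 2`,
  -- which happens for fewer than `M` primes.
  set c : ℕ → ℝ := fun p => if (p : ℝ) ^ δ < 2 then C₀ else 1
  have local_bound : ∀ p ∈ n.primeFactors,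
      ((n.factorization p + 1 : ℕ) : ℝ) ≤ c p * ((p : ℝ) ^ δ) ^ n.factorization p := by
    intro p hp
    have hp2 : (2 : ℝ) ≤ p := by exact_mod_cast (Nat.prime_of_mem_primeFactors hp).two_le
    push_cast
    simp only [c]
    split_ifs with hsmall
    · calc _ ≤ C₀ * ((2 : ℝ) ^ δ) ^ n.factorization p := succ_le_mul_pow_of_one_lt h2δ _
        _ ≤ _ := by gcongr
    · rw [one_mul]
      exact succ_le_pow_of_two_le (not_lt.1 hsmall) _
  have small_primes : #{p ∈ n.primeFactors | ((p : ℕ) : ℝ) ^ δ < 2} ≤ M := by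
    calc #{p ∈ n.primeFactors | ((p : ℕ) : ℝ) ^ δ < 2} ≤ #(range M) := by
          refine card_le_card fun p hp => ?_
          rw [mem_filter] at hp
          rw [mem_range, Nat.lt_ceil, ← rpow_lt_rpow_iff (by positivity) (by positivity) hδ,
            ← rpow_mul zero_le_two, inv_mul_cancel₀ hδ.ne', rpow_one]
          exact hp.2
      _ = M := card_range M
  calc (#n.divisors : ℝ) = ∏ p ∈ n.primeFactors, ((n.factorization p + 1 : ℕ) : ℝ) := by
        rw [Nat.card_divisors hn, Nat.cast_prod]
    _ ≤ ∏ p ∈ n.primeFactors, c p * ((p : ℝ) ^ δ) ^ n.factorization p :=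
        prod_le_prod (fun _ _ => by positivity) local_bound
    _ = C₀ ^ #{p ∈ n.primeFactors | ((p : ℕ) : ℝ) ^ δ < 2} * (n : ℝ) ^ δ := by
        rw [prod_mul_distrib, prod_primeFactors_rpow_pow_factorization hn, prod_ite,
          prod_const, prod_const, one_pow, mul_one]
    _ ≤ C₀ ^ M * (n : ℝ) ^ δ := by gcongr

theorem exists_card_divisors_pow_le_mul_rpow (k : ℕ) {ε : ℝ} (hε : 0 < ε) :
    ∃ C : ℝ, 0 < C ∧ ∀ n : ℕ, n ≠ 0 → (#n.divisors : ℝ) ^ k ≤ C * (n : ℝ) ^ ε := by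
  obtain ⟨C, hC, hdiv⟩ := exists_card_divisors_le_mul_rpow (δ := ε / (k + 1)) (by positivity)
  refine ⟨C ^ k, by positivity, fun n hn => ?_⟩
  have hn1 : (1 : ℝ) ≤ n := by exact_mod_cast Nat.one_le_iff_ne_zero.2 hn
  calc (#n.divisors : ℝ) ^ k ≤ (C * (n : ℝ) ^ (ε / (k + 1))) ^ k := by gcongr; exact hdiv n hn
    _ = C ^ k * (n : ℝ) ^ (ε / (k + 1) * k) := by
        rw [mul_pow, rpow_mul_natCast n.cast_nonneg]
    _ ≤ C ^ k * (n : ℝ) ^ ε := by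
        gcongr
        rw [div_mul_eq_mul_div, div_le_iff₀ (by positivity)]
        nlinarith

theorem sum_Icc_inv_le_mul_rpow {δ : ℝ} (hδ : 0 < δ) (N : ℕ) :
    ∑ ℓ ∈ Icc 1 N, (ℓ : ℝ)⁻¹ ≤ (1 + δ⁻¹) * (N : ℝ) ^ δ := by
  rcases N.eq_zero_or_pos with rfl | hN
  · simp [zero_rpow hδ.ne']
  have hNδ : 1 ≤ (N : ℝ) ^ δ := one_le_rpow (by exact_mod_cast hN) hδ.le
  have hharmonic : ∑ ℓ ∈ Icc 1 N, (ℓ : ℝ)⁻¹ ≤ 1 + log N := by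
    simpa [harmonic_eq_sum_Icc] using harmonic_le_one_add_log N
  have hlog : log N ≤ δ⁻¹ * (N : ℝ) ^ δ := by
    rw [inv_mul_eq_div]; exact log_natCast_le_rpow_div N hδ
  linarith

theorem exists_sum_card_divisors_pow_div_le (k : ℕ) {ε : ℝ} (hε : 0 < ε) :
    ∃ C : ℝ, 0 < C ∧ ∀ N : ℕ, ∑ ℓ ∈ Icc 1 N, (#ℓ.divisors : ℝ) ^ k / ℓ ≤ C * (N : ℝ) ^ ε := by
  obtain ⟨C, hC, hdiv⟩ := exists_card_divisors_pow_le_mul_rpow k (half_pos hε)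
  refine ⟨C * (1 + (ε / 2)⁻¹), by positivity, fun N => ?_⟩
  calc ∑ ℓ ∈ Icc 1 N, (#ℓ.divisors : ℝ) ^ k / ℓ
      ≤ ∑ ℓ ∈ Icc 1 N, C * (N : ℝ) ^ (ε / 2) * (ℓ : ℝ)⁻¹ := by
        refine sum_le_sum fun ℓ hℓ => ?_
        obtain ⟨hℓ1, hℓN⟩ := mem_Icc.1 hℓ
        rw [div_eq_mul_inv]
        gcongr
        calc (#ℓ.divisors : ℝ) ^ k ≤ C * (ℓ : ℝ) ^ (ε / 2) := hdiv ℓ (by omega)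
          _ ≤ C * (N : ℝ) ^ (ε / 2) := by gcongr
    _ ≤ C * (N : ℝ) ^ (ε / 2) * ((1 + (ε / 2)⁻¹) * (N : ℝ) ^ (ε / 2)) := by
        rw [← mul_sum]; gcongr; exact sum_Icc_inv_le_mul_rpow (half_pos hε) N
    _ = C * (1 + (ε / 2)⁻¹) * (N : ℝ) ^ ε := by
        rw [mul_mul_mul_comm, ← rpow_add' N.cast_nonneg (by linarith), add_halves]

theorem sum_card_filter_dvd_pow_eq (A S : Finset ℕ) (k : ℕ) :
    ∑ n ∈ S, #{q ∈ A | q ∣ n} ^ k =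
      ∑ t ∈ Fintype.piFinset fun _ : Fin k => A, #{n ∈ S | univ.lcm t ∣ n} := by
  have tuples : ∀ n, #{q ∈ A | q ∣ n} ^ k =
      #{t ∈ Fintype.piFinset fun _ : Fin k => A | ∀ i, t i ∣ n} := by
    intro n
    rw [← Fintype.card_piFinset_const]
    congr 1
    ext t
    simp [Fintype.mem_piFinset, forall_and]
  simp_rw [tuples, card_filter]
  rw [sum_comm]
  simp_rw [Finset.lcm_dvd_iff, mem_univ, true_implies]

theorem card_filter_lcm_eq_le {k ℓ : ℕ} (hℓ : ℓ ≠ 0) (T : Finset (Fin k → ℕ)) :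
    #{t ∈ T | univ.lcm t = ℓ} ≤ #ℓ.divisors ^ k := by
  rw [← Fintype.card_piFinset_const]
  refine card_le_card fun t ht => Fintype.mem_piFinset.2 fun i => ?_
  obtain ⟨-, rfl⟩ := mem_filter.1 ht
  exact Nat.mem_divisors.2 ⟨dvd_lcm (mem_univ i), hℓ⟩

theorem lcm_mem_Icc_pow {k M : ℕ} {t : Fin k → ℕ} (ht : ∀ i, t i ∈ Icc 1 M) :
    univ.lcm t ∈ Icc 1 (M ^ k) := by
  have hprod_pos : 0 < ∏ i, t i := prod_pos fun i _ => (mem_Icc.1 (ht i)).1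
  have hdvd : univ.lcm t ∣ ∏ i, t i := lcm_dvd fun i _ => dvd_prod_of_mem t (mem_univ i)
  refine mem_Icc.2 ⟨Nat.pos_of_dvd_of_pos hdvd hprod_pos, (Nat.le_of_dvd hprod_pos hdvd).trans ?_⟩
  calc ∏ i, t i ≤ ∏ _i : Fin k, M := prod_le_prod' fun i _ => (mem_Icc.1 (ht i)).2
    _ = M ^ k := by simp

theorem sum_inv_lcm_le {k N : ℕ} (T : Finset (Fin k → ℕ)) (hT : ∀ t ∈ T, univ.lcm t ∈ Icc 1 N) :
    ∑ t ∈ T, ((univ.lcm t : ℕ) : ℝ)⁻¹ ≤ ∑ ℓ ∈ Icc 1 N, (#ℓ.divisors : ℝ) ^ k / ℓ := by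
  rw [sum_comp (fun ℓ : ℕ => (ℓ : ℝ)⁻¹)]
  calc ∑ ℓ ∈ T.image (univ.lcm ·), #{t ∈ T | univ.lcm t = ℓ} • (ℓ : ℝ)⁻¹
      ≤ ∑ ℓ ∈ T.image (univ.lcm ·), (#ℓ.divisors : ℝ) ^ k / ℓ := by
        refine sum_le_sum fun ℓ hℓ => ?_
        obtain ⟨t, ht, rfl⟩ := mem_image.1 hℓ
        rw [nsmul_eq_mul, div_eq_mul_inv]
        gcongr
        exact_mod_cast card_filter_lcm_eq_le (Nat.one_le_iff_ne_zero.1 (mem_Icc.1 (hT t ht)).1) T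
    _ ≤ ∑ ℓ ∈ Icc 1 N, (#ℓ.divisors : ℝ) ^ k / ℓ :=
        sum_le_sum_of_subset_of_nonneg (image_subset_iff.2 hT) fun _ _ _ => by positivity

theorem sum_pow_card_filter_dvd_le {M : ℕ} (A : Finset ℕ) (hA : ∀ q ∈ A, q ∈ Icc 1 M) (R k : ℕ) :
    ∑ n ∈ Icc 1 R, (#{q ∈ A | q ∣ n} : ℝ) ^ k ≤
      R * ∑ ℓ ∈ Icc 1 (M ^ k), (#ℓ.divisors : ℝ) ^ k / ℓ := by
  set T := Fintype.piFinset fun _ : Fin k => A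
  have hT : ∀ t ∈ T, univ.lcm t ∈ Icc 1 (M ^ k) :=
    fun t ht => lcm_mem_Icc_pow fun i => hA _ (Fintype.mem_piFinset.1 ht i)
  have multiples : ∀ ℓ, (#{n ∈ Icc 1 R | ℓ ∣ n} : ℝ) ≤ R * (ℓ : ℝ)⁻¹ := by
    intro ℓ
    rw [← div_eq_mul_inv, ← zero_add 1, Icc_add_one_left_eq_Ioc, Nat.Ioc_filter_dvd_card_eq_div]
    exact Nat.cast_div_le
  calc ∑ n ∈ Icc 1 R, (#{q ∈ A | q ∣ n} : ℝ) ^ k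
      = ∑ t ∈ T, (#{n ∈ Icc 1 R | univ.lcm t ∣ n} : ℝ) := by
        exact_mod_cast sum_card_filter_dvd_pow_eq A (Icc 1 R) k
    _ ≤ ∑ t ∈ T, R * ((univ.lcm t : ℕ) : ℝ)⁻¹ := sum_le_sum fun t _ => multiples _
    _ ≤ R * ∑ ℓ ∈ Icc 1 (M ^ k), (#ℓ.divisors : ℝ) ^ k / ℓ := by
        rw [← mul_sum]; gcongr; exact sum_inv_lcm_le T hT

theorem card_filter_lt_le_rpow_neg_mul_sum_pow {α : Type*} (s : Finset α) {f : α → ℝ}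
    (hf : ∀ x ∈ s, 0 ≤ f x) {D : ℝ} (hD : 0 < D) (k : ℕ) :
    (#{x ∈ s | D < f x} : ℝ) ≤ D ^ (-(k : ℝ)) * ∑ x ∈ s, f x ^ k := by
  rw [rpow_neg hD.le, rpow_natCast, inv_mul_eq_div, le_div_iff₀ (by positivity), ← nsmul_eq_mul]
  calc #{x ∈ s | D < f x} • D ^ k ≤ ∑ x ∈ s with D < f x, f x ^ k :=
        card_nsmul_le_sum _ _ _ fun x hx => pow_le_pow_left₀ hD.le (mem_filter.1 hx).2.le k
    _ ≤ ∑ x ∈ s, f x ^ k :=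
        sum_le_sum_of_subset_of_nonneg (filter_subset _ _) fun x hx _ => pow_nonneg (hf x hx) k

theorem divisor_count_distribution_general (k : ℕ) (ε : ℝ) (hε : 0 < ε) :
    ∃ C : ℝ, 0 < C ∧ ∀ Q R : ℕ, 1 ≤ Q → 1 ≤ R → ∀ D : ℝ, 0 < D →
      (((Finset.Icc 1 R).filter
          (fun n => D < (((Finset.Ico Q (2 * Q)).filter (fun q => q ∣ n)).card : ℝ))).card : ℝ)
        ≤ C * D ^ (-(k : ℝ)) * R * (Q : ℝ) ^ (ε * k) := by
  obtain ⟨C, hC, hsum⟩ := exists_sum_card_divisors_pow_div_le k hε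
  refine ⟨C * 2 ^ (ε * k), by positivity, fun Q R hQ _ D hD => ?_⟩
  have hA : ∀ q ∈ Ico Q (2 * Q), q ∈ Icc 1 (2 * Q) := fun q hq => by
    obtain ⟨h1, h2⟩ := mem_Ico.1 hq
    exact mem_Icc.2 ⟨by omega, by omega⟩
  have moment : ∑ n ∈ Icc 1 R, (#{q ∈ Ico Q (2 * Q) | q ∣ n} : ℝ) ^ k ≤
      C * 2 ^ (ε * k) * R * (Q : ℝ) ^ (ε * k) :=
    calc _ ≤ R * ∑ ℓ ∈ Icc 1 ((2 * Q) ^ k), (#ℓ.divisors : ℝ) ^ k / ℓ :=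
          sum_pow_card_filter_dvd_le _ hA R k
      _ ≤ R * (C * (((2 * Q) ^ k : ℕ) : ℝ) ^ ε) := by gcongr; exact hsum _
      _ = C * 2 ^ (ε * k) * R * (Q : ℝ) ^ (ε * k) := by
          rw [Nat.cast_pow, ← rpow_natCast, ← rpow_mul (by positivity), Nat.cast_mul,
            mul_rpow (by positivity) (by positivity), Nat.cast_ofNat, mul_comm (k : ℝ) ε]
          ring
  calc _ ≤ D ^ (-(k : ℝ)) * ∑ n ∈ Icc 1 R, (#{q ∈ Ico Q (2 * Q) | q ∣ n} : ℝ) ^ k :=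
        card_filter_lt_le_rpow_neg_mul_sum_pow _ (fun _ _ => by positivity) hD k
    _ ≤ D ^ (-(k : ℝ)) * (C * 2 ^ (ε * k) * R * (Q : ℝ) ^ (ε * k)) := by gcongr
    _ = C * 2 ^ (ε * k) * D ^ (-(k : ℝ)) * R * (Q : ℝ) ^ (ε * k) := by ring

/-- Distributional bound for the truncated divisor function
`d_Q(n) = #{q ∣ n : Q ≤ q < 2Q}`:
`#{1 ≤ n ≤ R : d_Q(n) > D} ≤ C(k,ε) · D^{-k} · R · Q^{εk}`. -/
theorem divisor_count_distribution (k : ℕ) (hk : 1 ≤ k) (ε : ℝ) (hε : 0 < ε) :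
    ∃ C : ℝ, 0 < C ∧ ∀ Q R : ℕ, 1 ≤ Q → 1 ≤ R → ∀ D : ℝ, 0 < D →
      (((Finset.Icc 1 R).filter
          (fun n => D < (((Finset.Ico Q (2 * Q)).filter (fun q => q ∣ n)).card : ℝ))).card : ℝ)
        ≤ C * D ^ (-(k : ℝ)) * R * (Q : ℝ) ^ (ε * k) :=
  divisor_count_distribution_general k ε hε
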